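/- Let X and Y be Cantor spaces, f : X → X a chain mixing continuous surjection possessing a fixed point, and g : Y → Y an aperiodic homeomorphism. Then there exist homeomorphisms ψ_k : Y → X such that ψ_k ∘ g ∘ ψ_k⁻¹ converges uniformly to f. -/
import Mathlib


open Filter

/-- `f` is chain mixing. -/
def ChainMixing {X : Type*} [MetricSpace X] (f : X → X) : Prop :=
  ∀ δ : ℝ, 0 < δ → ∀ x y : X, ∃ N : ℕ, ∀ n ≥ N,
    ∃ c : ℕ → X, c 0 = x ∧ c n = y ∧ ∀ i < n, dist (f (c i)) (c (i + 1)) < δ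

open Set Topology

section PartI
variable {Z : Type*} [MetricSpace Z] [CompactSpace Z] [TotallyDisconnectedSpace Z]

set_option linter.unusedSectionVars false

/-- An indexed clopen partition of `C` into exactly `k` nonempty pieces of diameter `≤ ε`. -/
structure IsPart (C : Set Z) (ε : ℝ) (k : ℕ) (q : ℕ → Set Z) : Prop where
  clopen : ∀ i, IsClopen (q i)
  sub : ∀ i, q i ⊆ C
  disj : ∀ i j, i ≠ j → Disjoint (q i) (q j)
  cover : C ⊆ ⋃ i, q i
  supp : ∀ i, (q i).Nonempty ↔ i < k
  small : ∀ i, ∀ y ∈ q i, ∀ z ∈ q i, dist y z ≤ ε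

/-- Step 1: every nonempty clopen set admits a finite clopen partition with small pieces. -/
lemma exists_part (C : Set Z) (hC : IsClopen C) (hne : C.Nonempty) {ε : ℝ} (hε : 0 < ε) :
    ∃ k, 1 ≤ k ∧ ∃ q, IsPart C ε k q := by
  classical
  have hV : ∀ y : Z, y ∈ C → ∃ V : Set Z, IsClopen V ∧ y ∈ V ∧ V ⊆ C ∩ Metric.ball y (ε/2) := by
    intro y hy
    exact compact_exists_isClopen_in_isOpen (hC.2.inter Metric.isOpen_ball)
      ⟨hy, Metric.mem_ball_self (by linarith)⟩
  choose V hVclopen hVmem hVsub using hV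
  have hCc : IsCompact C := hC.1.isCompact
  obtain ⟨t, ht⟩ := hCc.elim_finite_subcover (fun y : C => V y.1 y.2)
    (fun y => (hVclopen y.1 y.2).2) (fun x hx => mem_iUnion.2 ⟨⟨x, hx⟩, hVmem x hx⟩)
  set l : List (Set Z) := t.toList.map (fun y => V y.1 y.2) with hl
  set W : ℕ → Set Z := fun i => l.getD i ∅ \ ⋃ j ∈ Finset.range i, l.getD j ∅ with hW
  have hlent : ∀ i, i < l.length → ∃ y : C, l.getD i ∅ = V y.1 y.2 := by
    intro i hi
    have hgd : l.getD i ∅ = l[i] := List.getD_eq_getElem _ _ hi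
    have h2 := List.getElem_mem (l := l) (n := i) hi
    obtain ⟨y, hyt, hye⟩ := List.mem_map.1 h2
    exact ⟨y, by rw [hgd, ← hye]⟩
  have hgetclopen : ∀ i, IsClopen (l.getD i ∅) := by
    intro i
    by_cases hi : i < l.length
    · obtain ⟨y, hy⟩ := hlent i hi
      rw [hy]; exact hVclopen y.1 y.2
    · rw [List.getD_eq_default _ _ (le_of_not_gt hi)]; exact isClopen_empty
  have hWclopen : ∀ i, IsClopen (W i) :=
    fun i => (hgetclopen i).diff (isClopen_biUnion_finset (fun j _ => hgetclopen j))
  have hgetsub : ∀ i, l.getD i ∅ ⊆ C ∧ ∀ y z, y ∈ l.getD i ∅ → z ∈ l.getD i ∅ → dist y z ≤ ε := by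
    intro i
    by_cases hi : i < l.length
    · obtain ⟨y, hy⟩ := hlent i hi
      rw [hy]
      refine ⟨(hVsub y.1 y.2).trans inter_subset_left, fun a b ha hb => ?_⟩
      have ha' := ((hVsub y.1 y.2) ha).2
      have hb' := ((hVsub y.1 y.2) hb).2
      rw [Metric.mem_ball] at ha' hb'
      calc dist a b ≤ dist a y.1 + dist y.1 b := dist_triangle _ _ _
        _ ≤ ε := by rw [dist_comm (y:Z) b] at *; linarith
    · rw [List.getD_eq_default _ _ (le_of_not_gt hi)]; simp
  have hWsub : ∀ i, W i ⊆ C := fun i => (diff_subset).trans (hgetsub i).1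
  have hWdisj : ∀ i j, i ≠ j → Disjoint (W i) (W j) := by
    intro i j hij
    rcases hij.lt_or_gt with h | h
    · refine Set.disjoint_left.2 fun x hxi hxj => ?_
      exact hxj.2 (mem_biUnion (Finset.mem_range.2 h) hxi.1)
    · refine Set.disjoint_left.2 fun x hxi hxj => ?_
      exact hxi.2 (mem_biUnion (Finset.mem_range.2 h) hxj.1)
  have hWcover : ∀ x ∈ C, ∃ i, x ∈ W i := by
    intro x hx
    have : ∃ i, x ∈ l.getD i ∅ := by
      have := ht hx
      simp only [mem_iUnion] at this
      obtain ⟨y, hyt, hy⟩ := this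
      have : V y.1 y.2 ∈ l := by
        rw [hl]; exact List.mem_map.2 ⟨y, Finset.mem_toList.2 hyt, rfl⟩
      obtain ⟨n, hn, he⟩ := List.mem_iff_getElem.1 this
      exact ⟨n, by rw [List.getD_eq_getElem _ _ hn, he]; exact hy⟩
    refine ⟨Nat.find this, Nat.find_spec this, ?_⟩
    simp only [mem_iUnion, Finset.mem_range, not_exists]
    intro j hj
    exact fun hmem => Nat.find_min this hj hmem
  have hWempty : ∀ i, l.length ≤ i → W i = ∅ := by
    intro i hi
    show l.getD i ∅ \ _ = ∅
    rw [List.getD_eq_default _ _ hi]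
    exact Set.empty_diff _
  -- compress
  set T : Finset ℕ := (Finset.range l.length).filter (fun i => (W i).Nonempty) with hT
  set k := T.card with hk
  have horder := T.orderIsoOfFin (rfl : T.card = k)
  set e := T.orderIsoOfFin (rfl : T.card = k) with he
  set q : ℕ → Set Z := fun i => if h : i < k then W (e ⟨i, h⟩) else ∅ with hq
  have hqW : ∀ i (h : i < k), q i = W (e ⟨i, h⟩) := fun i h => by rw [hq]; simp [h]
  have hqne : ∀ i, i < k → (q i).Nonempty := by
    intro i h
    rw [hqW i h]
    have h3 : (e ⟨i, h⟩ : ℕ) ∈ T := (e ⟨i, h⟩).2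
    exact (Finset.mem_filter.1 h3).2
  have hkpos : 1 ≤ k := by
    obtain ⟨x, hx⟩ := hne
    obtain ⟨i, hi⟩ := hWcover x hx
    have hil : i < l.length := by
      by_contra hcon
      rw [hWempty i (le_of_not_gt hcon)] at hi
      exact hi
    have h4 : i ∈ T := Finset.mem_filter.2 ⟨Finset.mem_range.2 hil, ⟨x, hi⟩⟩
    have : 0 < T.card := Finset.card_pos.2 ⟨i, h4⟩
    omega
  refine ⟨k, hkpos, q, ?_⟩
  constructor
  · intro i
    by_cases h : i < k
    · rw [hqW i h]; exact hWclopen _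
    · rw [hq]; simp [h, isClopen_empty]
  · intro i
    by_cases h : i < k
    · rw [hqW i h]; exact hWsub _
    · rw [hq]; simp [h]
  · intro i j hij
    by_cases hi : i < k
    · by_cases hj : j < k
      · rw [hqW i hi, hqW j hj]
        refine hWdisj _ _ ?_
        intro hcon
        apply hij
        have : e ⟨i, hi⟩ = e ⟨j, hj⟩ := Subtype.ext hcon
        have := e.injective this
        simpa using this
      · rw [hq]; simp [hj]
    · rw [hq]; simp [hi]
  · intro x hx
    obtain ⟨i, hi⟩ := hWcover x hx
    have hil : i < l.length := by
      by_contra hcon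
      rw [hWempty i (le_of_not_gt hcon)] at hi
      exact hi
    have hiT : i ∈ T := Finset.mem_filter.2 ⟨Finset.mem_range.2 hil, ⟨x, hi⟩⟩
    obtain ⟨j, hj⟩ := e.surjective ⟨i, hiT⟩
    refine mem_iUnion.2 ⟨j.1, ?_⟩
    rw [hqW j.1 j.2]
    have : ((e j : ℕ)) = i := by rw [hj]
    rw [Fin.eta, this]
    exact hi
  · intro i
    constructor
    · intro hne'
      by_contra h
      rw [hq] at hne'
      simp [h] at hne'
    · exact hqne i
  · intro i
    by_cases h : i < k
    · rw [hqW i h]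
      intro y hy z hz
      exact (hgetsub _).2 y z hy.1 hz.1
    · rw [hq]; simp [h]

/-- split a nonempty clopen set into two disjoint nonempty clopen pieces. -/
lemma split_two [PerfectSpace Z] (C : Set Z) (hC : IsClopen C) (hne : C.Nonempty) :
    ∃ A B : Set Z, IsClopen A ∧ IsClopen B ∧ A.Nonempty ∧ B.Nonempty ∧
      Disjoint A B ∧ A ∪ B = C := by
  obtain ⟨y, hy⟩ := hne
  have h1 : (𝓝[≠] y).NeBot := PerfectSpace.not_isolated y
  have h3 : (C \ {y}).Nonempty := by
    have h2 : C \ {y} ∈ 𝓝[≠] y := by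
      rw [mem_nhdsWithin]
      exact ⟨C, hC.2, hy, fun z hz => ⟨hz.1, hz.2⟩⟩
    by_contra hcon
    rw [not_nonempty_iff_eq_empty] at hcon
    rw [hcon] at h2
    exact h1.1 (by rwa [← empty_mem_iff_bot])
  obtain ⟨z, hzC, hzy⟩ := h3
  have hopen : IsOpen (C \ {z}) := hC.2.inter isClosed_singleton.isOpen_compl
  have hyz : y ∈ C \ {z} := ⟨hy, fun h => hzy (by rw [mem_singleton_iff] at h ⊢; rw [h])⟩
  obtain ⟨V, hVclopen, hyV, hVsub⟩ := compact_exists_isClopen_in_isOpen hopen hyz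
  exact ⟨V, C \ V, hVclopen, hC.diff hVclopen, ⟨y, hyV⟩, ⟨z, hzC, fun hz => (hVsub hz).2 rfl⟩,
    Set.disjoint_sdiff_right, Set.union_diff_cancel (fun x hx => (hVsub hx).1)⟩

/-- refine a partition by one more piece. -/
lemma isPart_succ [PerfectSpace Z] {C : Set Z} {ε : ℝ} {k : ℕ} {q : ℕ → Set Z}
    (h : IsPart C ε k q) (hk : 1 ≤ k) : ∃ q', IsPart C ε (k + 1) q' := by
  classical
  have hk0 : k ≠ 0 := by omega
  have h0 : (q 0).Nonempty := (h.supp 0).2 hk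
  obtain ⟨A, B, hA, hB, hAne, hBne, hAB, hABU⟩ := split_two (q 0) (h.clopen 0) h0
  set r : ℕ → Set Z := fun i => if i = 0 then A else if i = k then B else q i with hr
  have hAsub : A ⊆ q 0 := hABU ▸ subset_union_left
  have hBsub : B ⊆ q 0 := hABU ▸ subset_union_right
  have hr0 : r 0 = A := by simp [hr]
  have hrk : r k = B := by simp [hr, hk0]
  have hre : ∀ i, i ≠ 0 → i ≠ k → r i = q i := fun i h1 h2 => by simp [hr, h1, h2]
  have hqk : q k = ∅ := by
    by_contra hcon
    rw [← Ne, ← nonempty_iff_ne_empty] at hcon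
    exact absurd ((h.supp k).1 hcon) (lt_irrefl k)
  have hAdisj : ∀ j, j ≠ 0 → Disjoint A (q j) := fun j hj => ((h.disj 0 j (Ne.symm hj)).mono_left hAsub)
  have hBdisj : ∀ j, j ≠ 0 → Disjoint B (q j) := fun j hj => ((h.disj 0 j (Ne.symm hj)).mono_left hBsub)
  refine ⟨r, ?_, ?_, ?_, ?_, ?_, ?_⟩
  · intro i
    by_cases h1 : i = 0
    · rw [h1, hr0]; exact hA
    by_cases h2 : i = k
    · rw [h2, hrk]; exact hB
    · rw [hre i h1 h2]; exact h.clopen i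
  · intro i
    by_cases h1 : i = 0
    · rw [h1, hr0]; exact hAsub.trans (h.sub 0)
    by_cases h2 : i = k
    · rw [h2, hrk]; exact hBsub.trans (h.sub 0)
    · rw [hre i h1 h2]; exact h.sub i
  · intro i j hij
    have key : ∀ a, r a = A ∧ a = 0 ∨ r a = B ∧ a = k ∨ r a = q a ∧ a ≠ 0 ∧ a ≠ k := by
      intro a
      by_cases h1 : a = 0
      · exact Or.inl ⟨by rw [h1, hr0], h1⟩
      by_cases h2 : a = k
      · exact Or.inr (Or.inl ⟨by rw [h2, hrk], h2⟩)
      · exact Or.inr (Or.inr ⟨hre a h1 h2, h1, h2⟩)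
    rcases key i with ⟨e1, hi⟩ | ⟨e1, hi⟩ | ⟨e1, hi1, hi2⟩ <;>
      rcases key j with ⟨e2, hj⟩ | ⟨e2, hj⟩ | ⟨e2, hj1, hj2⟩ <;> rw [e1, e2]
    · exact absurd (hi.trans hj.symm) hij
    · exact hAB
    · exact hAdisj j (by omega)
    · exact hAB.symm
    · exact absurd (hi.trans hj.symm) hij
    · exact hBdisj j (by omega)
    · exact (hAdisj i hi1).symm
    · exact (hBdisj i hi1).symm
    · exact h.disj i j hij
  · intro x hx
    obtain ⟨i, hi⟩ := mem_iUnion.1 (h.cover hx)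
    have hik : i ≠ k := fun hcon => by rw [hcon, hqk] at hi; exact hi
    by_cases h1 : i = 0
    · rw [h1] at hi
      rw [← hABU] at hi
      rcases hi with hi | hi
      · exact mem_iUnion.2 ⟨0, by rw [hr0]; exact hi⟩
      · exact mem_iUnion.2 ⟨k, by rw [hrk]; exact hi⟩
    · exact mem_iUnion.2 ⟨i, by rw [hre i h1 hik]; exact hi⟩
  · intro i
    by_cases h1 : i = 0
    · rw [h1, hr0]; simpa using hAne
    by_cases h2 : i = k
    · rw [h2, hrk]; constructor
      · intro; omega
      · intro; exact hBne
    · rw [hre i h1 h2, h.supp i]; omega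
  · intro i
    by_cases h1 : i = 0
    · rw [h1, hr0]; intro y hy z hz; exact h.small 0 y (hAsub hy) z (hAsub hz)
    by_cases h2 : i = k
    · rw [h2, hrk]; intro y hy z hz; exact h.small 0 y (hBsub hy) z (hBsub hz)
    · rw [hre i h1 h2]; exact h.small i

/-- Main partition lemma: partitions into any sufficiently large number of pieces. -/
lemma exists_part_ge [PerfectSpace Z] (C : Set Z) (hC : IsClopen C) (hne : C.Nonempty)
    {ε : ℝ} (hε : 0 < ε) :
    ∃ k0, 1 ≤ k0 ∧ ∀ k, k0 ≤ k → ∃ q, IsPart C ε k q := by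
  obtain ⟨k0, hk0, q, hq⟩ := exists_part C hC hne hε
  refine ⟨k0, hk0, fun k hk => ?_⟩
  obtain ⟨d, rfl⟩ := Nat.exists_eq_add_of_le hk
  clear hk
  induction d with
  | zero => exact ⟨q, hq⟩
  | succ n ih =>
      obtain ⟨q', hq'⟩ := ih
      obtain ⟨q2, hq2⟩ := isPart_succ hq' (by omega)
      exact ⟨q2, by rwa [Nat.add_succ] at hq2⟩

end PartI




lemma exists_inv_lt {ε : ℝ} (hε : 0 < ε) : ∃ n : ℕ, 2 ≤ n ∧ 1/(n:ℝ) < ε := by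
  obtain ⟨n, hn⟩ := exists_nat_gt (1/ε)
  have hn0 : 0 < (n:ℝ) := lt_trans (by positivity) hn
  refine ⟨max n 2, le_max_right _ _, ?_⟩
  have hm0 : 0 < ((max n 2 : ℕ):ℝ) := by positivity
  have hmn : (1:ℝ)/(max n 2 : ℕ) ≤ 1/n :=
    one_div_le_one_div_of_le hn0 (by exact_mod_cast le_max_left _ _)
  have h1n : (1:ℝ)/n < ε := by
    rw [div_lt_iff₀ hn0]
    rw [div_lt_iff₀ hε] at hn
    linarith [mul_comm ε (n:ℝ)]
  linarith

section PartII
variable {Y : Type*} {X : Type*}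
  [MetricSpace Y] [CompactSpace Y] [PerfectSpace Y] [TotallyDisconnectedSpace Y] [Nonempty Y]
  [MetricSpace X] [CompactSpace X] [PerfectSpace X] [TotallyDisconnectedSpace X] [Nonempty X]

set_option linter.unusedSectionVars false

lemma matched_split (C : Set Y) (C' : Set X) (hC : IsClopen C) (hC' : IsClopen C')
    (hne : C.Nonempty) (hne' : C'.Nonempty) {ε : ℝ} (hε : 0 < ε) :
    ∃ (r : ℕ → Set Y × Set X) (m : ℕ), 1 ≤ m ∧
      IsPart C ε m (fun i => (r i).1) ∧ IsPart C' ε m (fun i => (r i).2) := by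
  obtain ⟨k0, hk0, hq⟩ := exists_part_ge C hC hne hε
  obtain ⟨k0', hk0', hp⟩ := exists_part_ge C' hC' hne' hε
  obtain ⟨q, hq⟩ := hq (max k0 k0') (le_max_left _ _)
  obtain ⟨p, hp⟩ := hp (max k0 k0') (le_max_right _ _)
  exact ⟨fun i => (q i, p i), max k0 k0', le_trans hk0 (le_max_left _ _), hq, hp⟩

open Classical in
/-- one refinement step for a matched pair of clopen sets -/
noncomputable def splitFun (c : Set Y × Set X) (n : ℕ) : ℕ → Set Y × Set X :=
  if h : IsClopen c.1 ∧ IsClopen c.2 ∧ c.1.Nonempty ∧ c.2.Nonempty then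
    (matched_split c.1 c.2 h.1 h.2.1 h.2.2.1 h.2.2.2
      (show (0:ℝ) < 1/(n+1) by positivity)).choose
  else fun _ => (∅, ∅)

lemma splitFun_spec {c : Set Y × Set X} {n : ℕ}
    (h : IsClopen c.1 ∧ IsClopen c.2 ∧ c.1.Nonempty ∧ c.2.Nonempty) :
    ∃ m, 1 ≤ m ∧ IsPart c.1 (1/(n+1)) m (fun i => (splitFun c n i).1) ∧
      IsPart c.2 (1/(n+1)) m (fun i => (splitFun c n i).2) := by
  rw [splitFun, dif_pos h]
  obtain ⟨m, hm, h1, h2⟩ := (matched_split c.1 c.2 h.1 h.2.1 h.2.2.1 h.2.2.2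
      (show (0:ℝ) < 1/(n+1) by positivity)).choose_spec
  exact ⟨m, hm, h1, h2⟩

lemma splitFun_empty {c : Set Y × Set X} {n : ℕ}
    (h : ¬(IsClopen c.1 ∧ IsClopen c.2 ∧ c.1.Nonempty ∧ c.2.Nonempty)) (i : ℕ) :
    splitFun c n i = (∅, ∅) := by
  rw [splitFun]
  rw [dif_neg h]

/-- the matched scheme, with prescribed first level. -/
noncomputable def FF (q : ℕ → Set Y) (p : ℕ → Set X) : List ℕ → Set Y × Set X
  | [] => (Set.univ, Set.univ)
  | i :: l => if l.isEmpty then (q i, p i) else splitFun (FF q p l) l.length i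

variable {εY εX : ℝ} {k : ℕ} {q : ℕ → Set Y} {p : ℕ → Set X}

lemma FF_nil : FF q p ([] : List ℕ) = (Set.univ, Set.univ) := rfl

lemma FF_single (i : ℕ) : FF q p [i] = (q i, p i) := rfl

lemma FF_cons (i : ℕ) {l : List ℕ} (hl : l ≠ []) :
    FF q p (i :: l) = splitFun (FF q p l) l.length i := by
  rw [FF]
  rw [if_neg (by simpa using hl)]

section WithHyp
variable (hk : 1 ≤ k) (hq : IsPart univ εY k q) (hp : IsPart univ εX k p)
include hk hq hp

lemma FF_nice : ∀ l : List ℕ, IsClopen (FF q p l).1 ∧ IsClopen (FF q p l).2 ∧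
    ((FF q p l).1.Nonempty ↔ (FF q p l).2.Nonempty) := by
  intro l
  induction l with
  | nil => simp [FF_nil, isClopen_univ, Set.univ_nonempty]
  | cons i t ih =>
      rcases eq_or_ne t [] with rfl | ht
      · refine ⟨?_, ?_, ?_⟩
        · rw [FF_single]; exact hq.clopen i
        · rw [FF_single]; exact hp.clopen i
        · rw [FF_single]; rw [hq.supp i, hp.supp i]
      · rw [FF_cons i ht]
        by_cases hcond : IsClopen (FF q p t).1 ∧ IsClopen (FF q p t).2 ∧
            (FF q p t).1.Nonempty ∧ (FF q p t).2.Nonempty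
        · obtain ⟨m, hm, h1, h2⟩ := splitFun_spec (n := t.length) hcond
          exact ⟨h1.clopen i, h2.clopen i, (h1.supp i).trans (h2.supp i).symm⟩
        · rw [splitFun_empty hcond]
          simp [isClopen_empty]

lemma FF_children : ∀ l : List ℕ, (FF q p l).1.Nonempty →
    ∃ m, 1 ≤ m ∧
      IsPart (FF q p l).1 (if l = [] then εY else 1/(l.length+1)) m
        (fun i => (FF q p (i :: l)).1) ∧
      IsPart (FF q p l).2 (if l = [] then εX else 1/(l.length+1)) m
        (fun i => (FF q p (i :: l)).2) := by
  intro l hne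
  rcases eq_or_ne l [] with rfl | hl
  · refine ⟨k, hk, ?_, ?_⟩
    · simpa [FF_single, FF_nil] using hq
    · simpa [FF_single, FF_nil] using hp
  · have hnice := FF_nice hk hq hp l
    have hcond : IsClopen (FF q p l).1 ∧ IsClopen (FF q p l).2 ∧
        (FF q p l).1.Nonempty ∧ (FF q p l).2.Nonempty :=
      ⟨hnice.1, hnice.2.1, hne, hnice.2.2.mp hne⟩
    obtain ⟨m, hm, h1, h2⟩ := splitFun_spec (n := l.length) hcond
    refine ⟨m, hm, ?_, ?_⟩
    · simp only [if_neg hl]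
      have he : ∀ i, FF q p (i :: l) = splitFun (FF q p l) l.length i :=
        fun i => FF_cons i hl
      convert h1 using 2 with i
      rw [he i]
    · simp only [if_neg hl]
      convert h2 using 2 with i
      rw [FF_cons i hl]

lemma FF_empty_child : ∀ (i : ℕ) (l : List ℕ), l ≠ [] → (FF q p l).1 = ∅ →
    FF q p (i :: l) = (∅, ∅) := by
  intro i l hl he
  rw [FF_cons i hl]
  refine splitFun_empty (fun hcond => ?_) i
  rw [he] at hcond
  exact hcond.2.2.1.ne_empty rfl

lemma FF_sub : ∀ (i : ℕ) (l : List ℕ),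
    (FF q p (i :: l)).1 ⊆ (FF q p l).1 ∧ (FF q p (i :: l)).2 ⊆ (FF q p l).2 := by
  intro i l
  by_cases hne : (FF q p l).1.Nonempty
  · obtain ⟨m, hm, h1, h2⟩ := FF_children hk hq hp l hne
    exact ⟨h1.sub i, h2.sub i⟩
  · rcases eq_or_ne l [] with rfl | hl
    · exact absurd (by simp [FF_nil, Set.univ_nonempty]) hne
    · rw [not_nonempty_iff_eq_empty] at hne
      rw [FF_empty_child hk hq hp i l hl hne]
      simp

lemma FF_disj : ∀ (l l' : List ℕ), l.length = l'.length → l ≠ l' →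
    Disjoint (FF q p l).1 (FF q p l').1 ∧ Disjoint (FF q p l).2 (FF q p l').2 := by
  intro l
  induction l with
  | nil => intro l' hlen hne; cases l' with
      | nil => exact absurd rfl hne
      | cons j t => simp at hlen
  | cons i t ih =>
      intro l' hlen hne
      cases l' with
      | nil => simp at hlen
      | cons j t' =>
          simp only [List.length_cons, Nat.succ_inj] at hlen
          rcases eq_or_ne t t' with rfl | htt
          · have hij : i ≠ j := fun hcon => hne (by rw [hcon])
            by_cases hT : (FF q p t).1.Nonempty
            · obtain ⟨m, hm, h1, h2⟩ := FF_children hk hq hp t hT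
              exact ⟨h1.disj i j hij, h2.disj i j hij⟩
            · rcases eq_or_ne t [] with rfl | ht
              · exact absurd (by simp [FF_nil, Set.univ_nonempty]) hT
              · rw [not_nonempty_iff_eq_empty] at hT
                rw [FF_empty_child hk hq hp i t ht hT]
                simp
          · obtain ⟨d1, d2⟩ := ih t' hlen htt
            exact ⟨d1.mono (FF_sub hk hq hp i t).1 (FF_sub hk hq hp j t').1,
              d2.mono (FF_sub hk hq hp i t).2 (FF_sub hk hq hp j t').2⟩

lemma FF_small : ∀ (i : ℕ) (l : List ℕ), l ≠ [] →
    (∀ a ∈ (FF q p (i :: l)).1, ∀ b ∈ (FF q p (i :: l)).1, dist a b ≤ 1/(l.length+1)) ∧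
    (∀ a ∈ (FF q p (i :: l)).2, ∀ b ∈ (FF q p (i :: l)).2, dist a b ≤ 1/(l.length+1)) := by
  intro i l hl
  by_cases hne : (FF q p l).1.Nonempty
  · obtain ⟨m, hm, h1, h2⟩ := FF_children hk hq hp l hne
    rw [if_neg hl] at h1 h2
    exact ⟨fun a ha b hb => h1.small i a ha b hb, fun a ha b hb => h2.small i a ha b hb⟩
  · rw [not_nonempty_iff_eq_empty] at hne
    rw [FF_empty_child hk hq hp i l hl hne]
    simp

lemma FF_cover1 : ∀ (l : List ℕ) (y : Y), y ∈ (FF q p l).1 → ∃ i, y ∈ (FF q p (i :: l)).1 := by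
  intro l y hy
  obtain ⟨m, hm, h1, h2⟩ := FF_children hk hq hp l ⟨y, hy⟩
  simpa using h1.cover hy

lemma FF_cover2 : ∀ (l : List ℕ) (x : X), x ∈ (FF q p l).2 → ∃ i, x ∈ (FF q p (i :: l)).2 := by
  intro l x hx
  have hne : (FF q p l).1.Nonempty := ((FF_nice hk hq hp l).2.2).mpr ⟨x, hx⟩
  obtain ⟨m, hm, h1, h2⟩ := FF_children hk hq hp l hne
  simpa using h2.cover hx

end WithHyp

open Classical in
/-- branch of a point `y : Y` in the scheme -/
noncomputable def bn1 (q : ℕ → Set Y) (p : ℕ → Set X) (y : Y) : ℕ → List ℕ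
  | 0 => []
  | n+1 => (if h : ∃ i, y ∈ (FF q p (i :: bn1 q p y n)).1 then h.choose else 0) :: bn1 q p y n

open Classical in
/-- branch of a point `x : X` in the scheme -/
noncomputable def bn2 (q : ℕ → Set Y) (p : ℕ → Set X) (x : X) : ℕ → List ℕ
  | 0 => []
  | n+1 => (if h : ∃ i, x ∈ (FF q p (i :: bn2 q p x n)).2 then h.choose else 0) :: bn2 q p x n

lemma bn1_length (q : ℕ → Set Y) (p : ℕ → Set X) (y : Y) : ∀ n, (bn1 q p y n).length = n := by
  intro n; induction n with
  | zero => rfl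
  | succ n ih => rw [bn1]; simp [ih]

lemma bn2_length (q : ℕ → Set Y) (p : ℕ → Set X) (x : X) : ∀ n, (bn2 q p x n).length = n := by
  intro n; induction n with
  | zero => rfl
  | succ n ih => rw [bn2]; simp [ih]

section WithHyp2
variable {εY εX : ℝ} {k : ℕ} {q : ℕ → Set Y} {p : ℕ → Set X}
variable (hk : 1 ≤ k) (hq : IsPart univ εY k q) (hp : IsPart univ εX k p)
include hk hq hp

lemma bn1_mem (y : Y) : ∀ n, y ∈ (FF q p (bn1 q p y n)).1 := by
  intro n
  induction n with
  | zero => rw [bn1, FF_nil]; exact mem_univ y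
  | succ n ih =>
      rw [bn1]
      have h : ∃ i, y ∈ (FF q p (i :: bn1 q p y n)).1 := FF_cover1 hk hq hp _ y ih
      rw [dif_pos h]
      exact h.choose_spec

lemma bn2_mem (x : X) : ∀ n, x ∈ (FF q p (bn2 q p x n)).2 := by
  intro n
  induction n with
  | zero => rw [bn2, FF_nil]; exact mem_univ x
  | succ n ih =>
      rw [bn2]
      have h : ∃ i, x ∈ (FF q p (i :: bn2 q p x n)).2 := FF_cover2 hk hq hp _ x ih
      rw [dif_pos h]
      exact h.choose_spec

lemma bn1_unique (y : Y) {n : ℕ} {l : List ℕ} (hlen : l.length = n)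
    (hy : y ∈ (FF q p l).1) : l = bn1 q p y n := by
  by_contra hcon
  have hdisj := (FF_disj hk hq hp l (bn1 q p y n) (by rw [hlen, bn1_length]) hcon).1
  exact Set.disjoint_left.1 hdisj hy (bn1_mem hk hq hp y n) 

lemma bn2_unique (x : X) {n : ℕ} {l : List ℕ} (hlen : l.length = n)
    (hx : x ∈ (FF q p l).2) : l = bn2 q p x n := by
  by_contra hcon
  have hdisj := (FF_disj hk hq hp l (bn2 q p x n) (by rw [hlen, bn2_length]) hcon).2
  exact Set.disjoint_left.1 hdisj hx (bn2_mem hk hq hp x n)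

/-- helper: small bound at depth `n ≥ 2` -/
lemma FF_small_len {l : List ℕ} (hl : 2 ≤ l.length) :
    (∀ a ∈ (FF q p l).1, ∀ b ∈ (FF q p l).1, dist a b ≤ 1/(l.length : ℝ)) ∧
    (∀ a ∈ (FF q p l).2, ∀ b ∈ (FF q p l).2, dist a b ≤ 1/(l.length : ℝ)) := by
  cases l with
  | nil => simp at hl
  | cons i t =>
      have ht : t ≠ [] := by
        intro h; rw [h] at hl; simp at hl
      have := FF_small hk hq hp i t ht
      have hlen : ((i :: t).length : ℝ) = (t.length : ℝ) + 1 := by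
        simp
      rw [hlen]
      exact this

lemma eq_of_all_levels1 {a b : Y} {u : ℕ → List ℕ} (hlen : ∀ n, (u n).length = n)
    (ha : ∀ n, a ∈ (FF q p (u n)).1) (hb : ∀ n, b ∈ (FF q p (u n)).1) : a = b := by
  rw [← dist_le_zero]
  refine le_of_forall_pos_le_add (fun ε hε => ?_)
  obtain ⟨m, hm2, hmε⟩ := exists_inv_lt hε
  have h2 : 2 ≤ (u m).length := by rw [hlen]; exact hm2
  have hd := (FF_small_len hk hq hp h2).1 a (ha m) b (hb m)
  rw [hlen] at hd
  linarith

lemma eq_of_all_levels2 {a b : X} {u : ℕ → List ℕ} (hlen : ∀ n, (u n).length = n)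
    (ha : ∀ n, a ∈ (FF q p (u n)).2) (hb : ∀ n, b ∈ (FF q p (u n)).2) : a = b := by
  rw [← dist_le_zero]
  refine le_of_forall_pos_le_add (fun ε hε => ?_)
  obtain ⟨m, hm2, hmε⟩ := exists_inv_lt hε
  have h2 : 2 ≤ (u m).length := by rw [hlen]; exact hm2
  have hd := (FF_small_len hk hq hp h2).2 a (ha m) b (hb m)
  rw [hlen] at hd
  linarith

lemma iInter1_nonempty (x : X) : (⋂ n, (FF q p (bn2 q p x n)).1).Nonempty := by
  apply IsCompact.nonempty_iInter_of_sequence_nonempty_isCompact_isClosed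
  · intro n
    have : bn2 q p x (n+1) = (bn2 q p x (n+1)).headI :: bn2 q p x n := by
      rw [bn2]; rfl
    rw [this]
    exact (FF_sub hk hq hp _ _).1
  · intro n
    have := bn2_mem hk hq hp x n
    exact ((FF_nice hk hq hp (bn2 q p x n)).2.2).mpr ⟨x, this⟩
  · exact ((FF_nice hk hq hp (bn2 q p x 0)).1).1.isCompact
  · intro n
    exact ((FF_nice hk hq hp (bn2 q p x n)).1).1

lemma iInter2_nonempty (y : Y) : (⋂ n, (FF q p (bn1 q p y n)).2).Nonempty := by
  apply IsCompact.nonempty_iInter_of_sequence_nonempty_isCompact_isClosed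
  · intro n
    have h : bn1 q p y (n+1) = (bn1 q p y (n+1)).headI :: bn1 q p y n := by
      rw [bn1]; rfl
    rw [h]
    exact (FF_sub hk hq hp _ _).2
  · intro n
    exact ((FF_nice hk hq hp (bn1 q p y n)).2.2).mp ⟨y, bn1_mem hk hq hp y n⟩
  · exact ((FF_nice hk hq hp (bn1 q p y 0)).2.1).1.isCompact
  · intro n
    exact ((FF_nice hk hq hp (bn1 q p y n)).2.1).1

/-- The main matching lemma: a homeomorphism sending the pieces `q i` onto `p i`. -/
lemma lemmaM : ∃ ψ : Y ≃ₜ X, ∀ i y, y ∈ q i → ψ y ∈ p i := by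
  classical
  -- the map
  set ψ0 : Y → X := fun y => (iInter2_nonempty hk hq hp y).some with hψ0
  have hmem : ∀ y n, ψ0 y ∈ (FF q p (bn1 q p y n)).2 := by
    intro y n
    have := (iInter2_nonempty hk hq hp y).some_mem
    rw [mem_iInter] at this
    exact this n
  -- injectivity
  have hinj : Function.Injective ψ0 := by
    intro a b hab
    by_contra hne
    have hdiff : ∃ n, bn1 q p a n ≠ bn1 q p b n := by
      by_contra hcon
      push_neg at hcon
      exact hne (eq_of_all_levels1 hk hq hp (fun n => bn1_length q p a n)
        (fun n => bn1_mem hk hq hp a n) (fun n => (hcon n) ▸ bn1_mem hk hq hp b n))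
    obtain ⟨n, hn⟩ := hdiff
    have hdisj := (FF_disj hk hq hp (bn1 q p a n) (bn1 q p b n)
      (by rw [bn1_length, bn1_length]) hn).2
    exact Set.disjoint_left.1 hdisj (hmem a n) (hab ▸ hmem b n)
  -- surjectivity
  have hsurj : Function.Surjective ψ0 := by
    intro x
    obtain ⟨y, hy⟩ := iInter1_nonempty hk hq hp x
    rw [mem_iInter] at hy
    refine ⟨y, ?_⟩
    have hbranch : ∀ n, bn2 q p x n = bn1 q p y n := by
      intro n
      exact bn1_unique hk hq hp y (bn2_length q p x n) (hy n)
    refine eq_of_all_levels2 hk hq hp (u := fun n => bn1 q p y n)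
      (fun n => bn1_length q p y n) (fun n => hmem y n) (fun n => ?_)
    show x ∈ (FF q p (bn1 q p y n)).2
    rw [← hbranch n]
    exact bn2_mem hk hq hp x n
  -- continuity
  have hcont : Continuous ψ0 := by
    rw [continuous_iff_continuousAt]
    intro y
    rw [ContinuousAt, Metric.tendsto_nhds]
    intro ε hε
    obtain ⟨m, hm2, hmε⟩ := exists_inv_lt hε
    have hopen : IsOpen (FF q p (bn1 q p y m)).1 := (FF_nice hk hq hp _).1.2
    have hnhds : (FF q p (bn1 q p y m)).1 ∈ 𝓝 y := hopen.mem_nhds (bn1_mem hk hq hp y m)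
    filter_upwards [hnhds] with z hz
    have hzb : bn1 q p y m = bn1 q p z m := bn1_unique hk hq hp z (bn1_length q p y m) hz
    have h2 : 2 ≤ (bn1 q p y m).length := by rw [bn1_length]; exact hm2
    have := (FF_small_len hk hq hp h2).2 (ψ0 z) (by rw [hzb]; exact hmem z m) (ψ0 y) (hmem y m)
    rw [bn1_length] at this
    linarith
  -- assemble
  set E : Y ≃ X := Equiv.ofBijective ψ0 ⟨hinj, hsurj⟩ with hE
  have hcE : Continuous E := hcont
  refine ⟨hcE.homeoOfEquivCompactToT2, ?_⟩
  intro i y hy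
  have h1 : y ∈ (FF q p [i]).1 := by rw [FF_single]; exact hy
  have hb : [i] = bn1 q p y 1 := bn1_unique hk hq hp y (by simp) h1
  have := hmem y 1
  rw [← hb, FF_single] at this
  exact this

end WithHyp2
end PartII

section PartIII
variable {Y : Type*} [MetricSpace Y] [CompactSpace Y] [TotallyDisconnectedSpace Y]

set_option linter.unusedSectionVars false

lemma orbit_lemma (g : Y ≃ₜ Y) (haper : ∀ n : ℕ, 1 ≤ n → (⇑g)^[n] ≠ id) (L : ℕ) :
    ∃ y : Y, ∀ i j, i ≤ L → j ≤ L → i ≠ j → (⇑g)^[i] y ≠ (⇑g)^[j] y := by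
  have hN : 1 ≤ Nat.factorial L := Nat.one_le_iff_ne_zero.2 (Nat.factorial_ne_zero L)
  have hid := haper (Nat.factorial L) hN
  have hy : ∃ y, (⇑g)^[Nat.factorial L] y ≠ y := by
    by_contra hcon
    push_neg at hcon
    exact hid (funext fun y => hcon y)
  obtain ⟨y, hy⟩ := hy
  have key : ∀ i j, i < j → j ≤ L → (⇑g)^[i] y = (⇑g)^[j] y → False := by
    intro i j hlt hjL heq
    have hdvd : (j - i) ∣ Nat.factorial L := Nat.dvd_factorial (by omega) (by omega)
    have hfix : (⇑g)^[j-i] ((⇑g)^[i] y) = (⇑g)^[i] y := by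
      rw [← Function.iterate_add_apply]
      have he : j - i + i = j := by omega
      rw [he, ← heq]
    have hfixN : (⇑g)^[Nat.factorial L] ((⇑g)^[i] y) = (⇑g)^[i] y := by
      obtain ⟨m, hm⟩ := hdvd
      rw [hm, Function.iterate_mul]
      exact Function.IsFixedPt.iterate hfix m
    have hcomm : (⇑g)^[i] ((⇑g)^[Nat.factorial L] y) = (⇑g)^[i] y := by
      rw [← Function.iterate_add_apply, Nat.add_comm, Function.iterate_add_apply, hfixN]
    exact hy (g.injective.iterate i hcomm)
  refine ⟨y, fun i j hi hj hij => ?_⟩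
  rcases lt_or_gt_of_ne hij with h | h
  · exact fun heq => key i j h hj heq
  · exact fun heq => key j i h hi heq.symm

lemma isClopen_iterate_image (g : Y ≃ₜ Y) (i : ℕ) {s : Set Y} (hs : IsClopen s) :
    IsClopen ((⇑g)^[i] '' s) := by
  induction i with
  | zero => simpa
  | succ n ih =>
      rw [Function.iterate_succ', Set.image_comp, ← Homeomorph.preimage_symm]
      exact ih.preimage g.symm.continuous

lemma tower_lemma (g : Y ≃ₜ Y) {L : ℕ} {y0 : Y}
    (hdist : ∀ i j, i ≤ L → j ≤ L → i ≠ j → (⇑g)^[i] y0 ≠ (⇑g)^[j] y0) :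
    ∃ B : Set Y, IsClopen B ∧ y0 ∈ B ∧
      ∀ i j, i ≤ L → j ≤ L → i ≠ j → Disjoint ((⇑g)^[i] '' B) ((⇑g)^[j] '' B) := by
  classical
  set z : ℕ → Y := fun i => (⇑g)^[i] y0 with hz
  set S := (Finset.range (L+1)) ×ˢ (Finset.range (L+1)) with hS
  have hSne : S.Nonempty := ⟨(0,0), by simp [hS]⟩
  set e : ℕ × ℕ → ℝ := fun pr => if pr.1 = pr.2 then 1 else dist (z pr.1) (z pr.2) with he
  set ρ := S.inf' hSne e with hρ
  have hρpos : 0 < ρ := by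
    rw [hρ, Finset.lt_inf'_iff]
    intro b hb
    rw [he]
    dsimp only
    split_ifs with h
    · norm_num
    · obtain ⟨h1, h2⟩ := Finset.mem_product.1 hb
      rw [Finset.mem_range] at h1 h2
      exact dist_pos.2 (hdist b.1 b.2 (by omega) (by omega) h)
  have hρle : ∀ i j, i ≤ L → j ≤ L → i ≠ j → ρ ≤ dist (z i) (z j) := by
    intro i j hi hj hij
    have hmem : (i, j) ∈ S := by
      rw [hS, Finset.mem_product]
      constructor <;> rw [Finset.mem_range] <;> omega
    have hle := Finset.inf'_le e hmem
    rw [← hρ] at hle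
    rw [he] at hle
    dsimp only at hle
    rwa [if_neg hij] at hle
  have hW : ∀ i : ℕ, ∃ W : Set Y, IsClopen W ∧ z i ∈ W ∧ W ⊆ Metric.ball (z i) (ρ/2) :=
    fun i => compact_exists_isClopen_in_isOpen Metric.isOpen_ball
      (Metric.mem_ball_self (by linarith))
  choose W hWclopen hWmem hWsub using hW
  set B := ⋂ i ∈ Finset.range (L+1), (⇑g)^[i] ⁻¹' W i with hB
  refine ⟨B, ?_, ?_, ?_⟩
  · exact isClopen_biInter_finset
      (fun i _ => (hWclopen i).preimage (g.continuous.iterate i))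
  · rw [hB]
    refine mem_iInter₂.2 (fun i _ => ?_)
    exact hWmem i
  · intro i j hi hj hij
    have himg : ∀ i, i ≤ L → (⇑g)^[i] '' B ⊆ W i := by
      intro i hi
      rintro _ ⟨b, hb, rfl⟩
      rw [hB] at hb
      exact mem_iInter₂.1 hb i (Finset.mem_range.2 (by omega))
    have hWdisj : Disjoint (W i) (W j) := by
      rw [Set.disjoint_left]
      intro a hai haj
      have h1 := hWsub i hai
      have h2 := hWsub j haj
      rw [Metric.mem_ball] at h1 h2
      have := hρle i j hi hj hij
      have htri : dist (z i) (z j) ≤ dist a (z i) + dist a (z j) := dist_triangle_left _ _ _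
      linarith
    exact hWdisj.mono (himg i hi) (himg j hj)

lemma path_concat {K : ℕ} {Edg : ℕ → ℕ → Prop} {w1 w2 : ℕ → ℕ} {L1 L2 : ℕ} {a b c : ℕ}
    (h10 : w1 0 = a) (h1L : w1 L1 = b) (h1E : ∀ i, i < L1 → Edg (w1 i) (w1 (i+1)))
    (h1K : ∀ i, w1 i < K)
    (h20 : w2 0 = b) (h2L : w2 L2 = c) (h2E : ∀ i, i < L2 → Edg (w2 i) (w2 (i+1)))
    (h2K : ∀ i, w2 i < K) :
    ∃ w : ℕ → ℕ, w 0 = a ∧ w (L1+L2) = c ∧ (∀ i, i < L1 + L2 → Edg (w i) (w (i+1))) ∧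
      (∀ i, w i < K) ∧ (∀ i, i ≤ L1 → w i = w1 i) ∧ (∀ j, w (L1 + j) = w2 j) := by
  classical
  set w : ℕ → ℕ := fun i => if i < L1 then w1 i else w2 (i - L1) with hw
  have hagree : ∀ i, i ≤ L1 → w i = w1 i := by
    intro i hi
    rcases lt_or_eq_of_le hi with h | h
    · rw [hw]; simp [h]
    · rw [hw, h]
      simp only [lt_self_iff_false, if_false, Nat.sub_self]
      rw [h20, ← h1L]
  have hshift : ∀ j, w (L1 + j) = w2 j := by
    intro j
    rw [hw]
    have : ¬(L1 + j < L1) := by omega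
    simp only [this, if_false]
    congr 1
    omega
  refine ⟨w, by rw [hagree 0 (by omega), h10], by rw [hshift L2, h2L], ?_, ?_, hagree, hshift⟩
  · intro i hi
    by_cases h : i + 1 ≤ L1
    · rw [hagree i (by omega), hagree (i+1) h]
      exact h1E i (by omega)
    · have hi1 : L1 ≤ i := by omega
      have e1 : w i = w2 (i - L1) := by
        have := hshift (i - L1)
        rwa [Nat.add_sub_cancel' hi1] at this
      have e2 : w (i+1) = w2 (i - L1 + 1) := by
        have := hshift (i - L1 + 1)
        have he : L1 + (i - L1 + 1) = i + 1 := by omega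
        rwa [he] at this
      rw [e1, e2]
      exact h2E (i - L1) (by omega)
  · intro i
    rw [hw]
    dsimp only
    split_ifs
    · exact h1K i
    · exact h2K _

end PartIII
section Core
variable {X Y : Type*}
  [MetricSpace X] [CompactSpace X] [PerfectSpace X] [TotallyDisconnectedSpace X] [Nonempty X]
  [MetricSpace Y] [CompactSpace Y] [PerfectSpace Y] [TotallyDisconnectedSpace Y] [Nonempty Y]

set_option linter.unusedSectionVars false
set_option maxHeartbeats 1000000

lemma core_approx (f : X → X) (hf : Continuous f) (hcm : ChainMixing f)
    (hfix : ∃ x : X, f x = x)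
    (g : Y ≃ₜ Y) (haper : ∀ n : ℕ, 1 ≤ n → (⇑g)^[n] ≠ id)
    {δ : ℝ} (hδ : 0 < δ) :
    ∃ ψ : Y ≃ₜ X, ∀ x, dist (ψ (g (ψ.symm x))) (f x) < δ := by
  classical
  -- uniform continuity modulus
  obtain ⟨η, hη, hηf⟩ : ∃ η > 0, ∀ a b : X, dist a b < η → dist (f a) (f b) < δ/4 := by
    have h := Metric.uniformContinuous_iff.1
      (CompactSpace.uniformContinuous_of_continuous hf) (δ/4) (by linarith)
    obtain ⟨η, hη, h⟩ := h
    exact ⟨η, hη, fun a b hab => h hab⟩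
  set ε : ℝ := min (η/2) (δ/4) with hεdef
  have hεpos : 0 < ε := lt_min (by linarith) (by linarith)
  -- partition of X
  obtain ⟨K, hK1, P, hP⟩ := exists_part (univ : Set X) isClopen_univ univ_nonempty hεpos
  -- partOf
  have hcov : ∀ x : X, ∃ i, x ∈ P i := fun x => by simpa using hP.cover (mem_univ x)
  set partOf : X → ℕ := fun x => (hcov x).choose with hpartOf
  have hpart_mem : ∀ x, x ∈ P (partOf x) := fun x => (hcov x).choose_spec
  have hpart_lt : ∀ x, partOf x < K := fun x => (hP.supp _).1 ⟨x, hpart_mem x⟩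
  have hpart_eq : ∀ x i, x ∈ P i → partOf x = i := by
    intro x i hx
    by_contra hne
    exact Set.disjoint_left.1 (hP.disj _ i hne) (hpart_mem x) hx
  -- separation constant
  obtain ⟨ε0, hε0pos, hε0⟩ :
      ∃ ε0, 0 < ε0 ∧ ∀ i j a b, a ∈ P i → b ∈ P j → dist a b < ε0 → i = j := by
    have hpair : ∀ pr : ℕ × ℕ, ∃ e : ℝ, 0 < e ∧
        (pr.1 = pr.2 ∨ ∀ a b, a ∈ P pr.1 → b ∈ P pr.2 → e ≤ dist a b) := by
      intro pr
      rcases eq_or_ne pr.1 pr.2 with h | h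
      · exact ⟨1, one_pos, Or.inl h⟩
      · have hdisj : Disjoint (P pr.1) (P pr.2) := hP.disj _ _ h
        obtain ⟨γ, hγ, hdisj2⟩ := hdisj.exists_thickenings
          (hP.clopen pr.1).1.isCompact (hP.clopen pr.2).1
        refine ⟨γ, hγ, Or.inr fun a b ha hb => ?_⟩
        by_contra hcon
        push_neg at hcon
        have hb1 : b ∈ Metric.thickening γ (P pr.1) :=
          Metric.mem_thickening_iff.2 ⟨a, ha, by rw [dist_comm] at hcon; exact hcon⟩
        have hb2 : b ∈ Metric.thickening γ (P pr.2) := Metric.self_subset_thickening hγ _ hb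
        exact Set.disjoint_left.1 hdisj2 hb1 hb2
    choose e hepos heprop using hpair
    set S := (Finset.range K) ×ˢ (Finset.range K) with hS
    have hSne : S.Nonempty := ⟨(0,0), by rw [hS, Finset.mem_product]; simp; omega⟩
    refine ⟨S.inf' hSne e, ?_, ?_⟩
    · rw [Finset.lt_inf'_iff]; exact fun b _ => hepos b
    · intro i j a b ha hb hlt
      have hiK : i < K := (hP.supp i).1 ⟨a, ha⟩
      have hjK : j < K := (hP.supp j).1 ⟨b, hb⟩
      rcases heprop (i,j) with h | h
      · exact h
      · exfalso
        have h1 : e (i,j) ≤ dist a b := h a b ha hb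
        have h2 : S.inf' hSne e ≤ e (i,j) :=
          Finset.inf'_le e (by rw [hS, Finset.mem_product]; exact ⟨Finset.mem_range.2 hiK, Finset.mem_range.2 hjK⟩)
        linarith
  -- the transition graph
  set Edg : ℕ → ℕ → Prop := fun a b => ∃ z, z ∈ P a ∧ f z ∈ P b with hEdg
  -- chains yield paths in the graph
  have hpath : ∀ a b, a < K → b < K → ∃ N, ∀ n, N ≤ n →
      ∃ w : ℕ → ℕ, w 0 = a ∧ w n = b ∧ (∀ i, i < n → Edg (w i) (w (i+1))) ∧ (∀ i, w i < K) := by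
    intro a b ha hb
    obtain ⟨xa, hxa⟩ := (hP.supp a).2 ha
    obtain ⟨xb, hxb⟩ := (hP.supp b).2 hb
    obtain ⟨N, hN⟩ := hcm ε0 hε0pos xa xb
    refine ⟨N, fun n hn => ?_⟩
    obtain ⟨c, hc0, hcn, hcstep⟩ := hN n hn
    refine ⟨fun i => partOf (c i), by show partOf (c 0) = a; rw [hc0]; exact hpart_eq xa a hxa,
      by show partOf (c n) = b; rw [hcn]; exact hpart_eq xb b hxb, ?_, fun i => hpart_lt _⟩
    intro i hi
    have h2 : f (c i) ∈ P (partOf (f (c i))) := hpart_mem _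
    have h3 : partOf (f (c i)) = partOf (c (i+1)) :=
      hε0 _ _ _ _ h2 (hpart_mem _) (hcstep i hi)
    refine ⟨c i, hpart_mem _, ?_⟩
    show f (c i) ∈ P (partOf (c (i+1)))
    rw [← h3]
    exact h2
  -- loop vertex
  obtain ⟨xs, hxs⟩ := hfix
  set astar := partOf xs with hastar
  have hastarK : astar < K := hpart_lt xs
  have hloop : Edg astar astar := ⟨xs, hpart_mem xs, by rw [hxs]; exact hpart_mem xs⟩
  -- grand path visiting all vertices
  have hgrand : ∃ L, 1 ≤ L ∧ ∃ w : ℕ → ℕ, w 0 = astar ∧ w L = astar ∧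
      (∀ i, i < L → Edg (w i) (w (i+1))) ∧ (∀ i, w i < K) ∧
      (∀ v, v < K → ∃ i, i ≤ L ∧ w i = v) := by
    have main : ∀ M, M ≤ K → ∃ L, 1 ≤ L ∧ ∃ w : ℕ → ℕ, w 0 = astar ∧ w L = astar ∧
        (∀ i, i < L → Edg (w i) (w (i+1))) ∧ (∀ i, w i < K) ∧
        (∀ v, v < M → ∃ i, i ≤ L ∧ w i = v) := by
      intro M
      induction M with
      | zero =>
          intro _
          obtain ⟨N, hN⟩ := hpath astar astar hastarK hastarK
          obtain ⟨w, hw0, hwn, hwE, hwK⟩ := hN (max N 1) (le_max_left _ _)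
          exact ⟨max N 1, le_max_right _ _, w, hw0, hwn, hwE, hwK,
            fun v hv => absurd hv (by omega)⟩
      | succ M ih =>
          intro hM
          obtain ⟨L1, hL1, w1, h10, h1L, h1E, h1K, h1vis⟩ := ih (by omega)
          obtain ⟨N2, hN2⟩ := hpath astar M hastarK (by omega)
          obtain ⟨w2, h20, h2L, h2E, h2K⟩ := hN2 (max N2 1) (le_max_left _ _)
          obtain ⟨N3, hN3⟩ := hpath M astar (by omega) hastarK
          obtain ⟨w3, h30, h3L, h3E, h3K⟩ := hN3 (max N3 1) (le_max_left _ _)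
          obtain ⟨u, hu0, huL, huE, huK, huag, hush⟩ :=
            path_concat h10 h1L h1E h1K h20 h2L h2E h2K
          obtain ⟨w, hw0, hwL, hwE, hwK, hwag, hwsh⟩ :=
            path_concat hu0 huL huE huK h30 h3L h3E h3K
          refine ⟨L1 + max N2 1 + max N3 1, by omega, w, hw0, hwL, hwE, hwK, ?_⟩
          intro v hv
          rcases Nat.lt_or_ge v M with h | h
          · obtain ⟨i, hi, hival⟩ := h1vis v h
            refine ⟨i, by omega, ?_⟩
            rw [hwag i (by omega), huag i hi, hival]
          · have hvM : v = M := by omega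
            refine ⟨L1 + max N2 1, by omega, ?_⟩
            rw [hwag _ (le_refl _), hush (max N2 1), h2L, hvM]
    exact main K le_rfl
  obtain ⟨L, hLpos, w, hw0, hwL, hwE, hwK, hwvis⟩ := hgrand
  obtain ⟨y0, hy0⟩ := orbit_lemma g haper L
  obtain ⟨B, hBclopen, hy0B, hBdisj⟩ := tower_lemma g hy0
  set T : ℕ → Set Y := fun i => (⇑g)^[i] '' B with hT
  have hTclopen : ∀ i, IsClopen (T i) := fun i => isClopen_iterate_image g i hBclopen
  have hTne : ∀ i, (T i).Nonempty := fun i => ⟨_, Set.mem_image_of_mem _ hy0B⟩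
  have hTsucc : ∀ i, T (i+1) = ⇑g '' T i := by
    intro i
    rw [hT]
    dsimp only
    rw [Function.iterate_succ', Set.image_comp]
  set c : Y → ℕ := fun z => if h : ∃ i, i ≤ L ∧ z ∈ T i then w h.choose else astar with hc
  have hcT : ∀ z i, i ≤ L → z ∈ T i → c z = w i := by
    intro z i hi hz
    have hex : ∃ i, i ≤ L ∧ z ∈ T i := ⟨i, hi, hz⟩
    rw [hc]
    dsimp only
    rw [dif_pos hex]
    have hch := hex.choose_spec
    congr 1
    by_contra hne
    exact Set.disjoint_left.1 (hBdisj _ _ hch.1 hi hne) hch.2 hz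
  have hcelse : ∀ z, (∀ i, i ≤ L → z ∉ T i) → c z = astar := by
    intro z hz
    rw [hc]
    dsimp only
    rw [dif_neg]
    rintro ⟨i, hi, hmem⟩
    exact hz i hi hmem
  have hcK : ∀ z, c z < K := by
    intro z
    rw [hc]
    dsimp only
    split_ifs with h
    · exact hwK _
    · exact hastarK
  have hTstep : ∀ z j, g z ∈ T (j+1) → z ∈ T j := by
    intro z j hgz
    rw [hTsucc j] at hgz
    obtain ⟨z', hz', hez⟩ := hgz
    rwa [← g.injective hez]
  have hedge : ∀ z, Edg (c z) (c (g z)) := by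
    have haux : ∀ z, (∀ i, i < L → z ∉ T i) → c (g z) = astar := by
      intro z hz
      by_cases h' : ∃ j, j ≤ L ∧ g z ∈ T j
      · obtain ⟨j, hj, hgz⟩ := h'
        match j with
        | 0 => rw [hcT _ 0 (by omega) hgz, hw0]
        | Nat.succ j' =>
            exfalso
            exact hz j' (by omega) (hTstep z j' hgz)
      · push_neg at h'
        exact hcelse _ h'
    intro z
    by_cases h : ∃ i, i < L ∧ z ∈ T i
    · obtain ⟨i, hiL, hz⟩ := h
      have hgz : g z ∈ T (i+1) := by rw [hTsucc]; exact Set.mem_image_of_mem _ hz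
      rw [hcT z i (by omega) hz, hcT (g z) (i+1) (by omega) hgz]
      exact hwE i hiL
    · push_neg at h
      have h2 : c (g z) = astar := haux z h
      by_cases hzL : z ∈ T L
      · rw [hcT z L le_rfl hzL, hwL, h2]; exact hloop
      · have h1 : c z = astar := hcelse z (fun i hi hmem => by
          rcases Nat.lt_or_ge i L with hh | hh
          · exact h i hh hmem
          · have hiL : i = L := by omega
            rw [hiL] at hmem; exact hzL hmem)
        rw [h1, h2]; exact hloop
  -- the clopen partition of Y given by the colouring
  set QS : ℕ → Set Y := fun v => c ⁻¹' {v} with hQS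
  set R : Set Y := ⋃ i ∈ Finset.range (L+1), T i with hR
  have hmemQS : ∀ z v, z ∈ QS v ↔ c z = v := by
    intro z v
    rw [hQS]
    exact Iff.rfl
  have hQeq : ∀ v, QS v = (⋃ i ∈ (Finset.range (L+1)).filter (fun i => w i = v), T i)
      ∪ (if astar = v then Rᶜ else ∅) := by
    intro v
    ext z
    rw [hmemQS]
    constructor
    · intro hcz
      by_cases h : ∃ i, i ≤ L ∧ z ∈ T i
      · obtain ⟨i, hi, hz⟩ := h
        left
        exact Set.mem_iUnion₂.2 ⟨i, Finset.mem_filter.2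
          ⟨Finset.mem_range.2 (by omega), by rw [← hcz, hcT z i hi hz]⟩, hz⟩
      · right
        push_neg at h
        have hca := hcelse z h
        have hav : astar = v := by rw [← hcz, hca]
        rw [if_pos hav]
        rw [hR]
        simp only [mem_compl_iff, mem_iUnion, not_exists]
        intro i hi hmem
        exact h i (by rw [Finset.mem_range] at hi; omega) hmem
    · intro hz
      rcases hz with hz | hz
      · obtain ⟨i, hi, hzT⟩ := Set.mem_iUnion₂.1 hz
        rw [Finset.mem_filter, Finset.mem_range] at hi
        rw [hcT z i (by omega) hzT]
        exact hi.2
      · by_cases hav : astar = v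
        · rw [if_pos hav] at hz
          rw [← hav]
          apply hcelse
          intro i hi hmem
          rw [hR] at hz
          exact hz (Set.mem_iUnion₂.2 ⟨i, Finset.mem_range.2 (by omega), hmem⟩)
        · rw [if_neg hav] at hz
          exact absurd hz (notMem_empty z)
  have hQpart : IsPart (univ : Set Y) (Metric.diam (univ : Set Y)) K QS := by
    constructor
    · intro v
      rw [hQeq v]
      refine IsClopen.union (isClopen_biUnion_finset (fun i _ => hTclopen i)) ?_
      split_ifs
      · exact (isClopen_biUnion_finset (fun i _ => hTclopen i)).compl
      · exact isClopen_empty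
    · intro v
      exact subset_univ _
    · intro i j hij
      rw [Set.disjoint_left]
      intro z hz1 hz2
      rw [hmemQS] at hz1 hz2
      exact hij (hz1 ▸ hz2)
    · intro z _
      exact mem_iUnion.2 ⟨c z, (hmemQS z (c z)).2 rfl⟩
    · intro v
      constructor
      · rintro ⟨z, hz⟩
        rw [hmemQS] at hz
        rw [← hz]
        exact hcK z
      · intro hv
        obtain ⟨i, hi, hival⟩ := hwvis v hv
        obtain ⟨z, hz⟩ := hTne i
        exact ⟨z, (hmemQS z v).2 (by rw [hcT z i hi hz]; exact hival)⟩
    · intro i a ha b hb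
      exact Metric.dist_le_diam_of_mem isCompact_univ.isBounded (mem_univ a) (mem_univ b)
  -- apply the matching lemma
  obtain ⟨ψ, hψ⟩ := lemmaM hK1 hQpart hP
  refine ⟨ψ, fun x => ?_⟩
  set y := ψ.symm x with hy
  have hx : ψ y = x := ψ.apply_symm_apply x
  have hyQ : y ∈ QS (c y) := (hmemQS y (c y)).2 rfl
  have hxP : x ∈ P (c y) := by rw [← hx]; exact hψ (c y) y hyQ
  have hgyQ : g y ∈ QS (c (g y)) := (hmemQS _ _).2 rfl
  have hψgy : ψ (g y) ∈ P (c (g y)) := hψ _ _ hgyQ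
  obtain ⟨z, hzv, hfz⟩ := hedge y
  have h1 : dist (ψ (g y)) (f z) ≤ ε := hP.small _ _ hψgy _ hfz
  have h2 : dist z x ≤ ε := hP.small _ _ hzv _ hxP
  have h3 : dist (f z) (f x) < δ/4 := hηf z x (by
    have hε2 : ε ≤ η/2 := min_le_left _ _
    linarith)
  have htri : dist (ψ (g y)) (f x) ≤ dist (ψ (g y)) (f z) + dist (f z) (f x) :=
    dist_triangle _ _ _
  have hεle : ε ≤ δ/4 := min_le_right _ _
  calc dist (ψ (g y)) (f x) ≤ ε + δ/4 := by linarith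
    _ < δ := by linarith

end Core

/-- Corollary: if `f` is a chain mixing continuous surjection of a Cantor space with
a fixed point and `g` is an aperiodic homeomorphism of a Cantor space, then
homeomorphisms conjugate to `g` approximate `f` uniformly. -/
theorem stmt_18 {X Y : Type*}
    [MetricSpace X] [CompactSpace X] [PerfectSpace X]
    [TotallyDisconnectedSpace X] [Nonempty X]
    [MetricSpace Y] [CompactSpace Y] [PerfectSpace Y]
    [TotallyDisconnectedSpace Y] [Nonempty Y]
    (f : X → X) (hf : Continuous f) (hsurj : Function.Surjective f)
    (hcm : ChainMixing f) (hfix : ∃ x : X, f x = x)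
    (g : Y ≃ₜ Y) (haper : ∀ n : ℕ, 1 ≤ n → (⇑g)^[n] ≠ id) :
    ∃ ψ : ℕ → Y ≃ₜ X,
      TendstoUniformly (fun k x => ψ k (g ((ψ k).symm x))) f atTop := by
  have hcore : ∀ k : ℕ, ∃ ψ : Y ≃ₜ X, ∀ x, dist (ψ (g (ψ.symm x))) (f x) < 1/((k:ℝ)+1) :=
    fun k => core_approx f hf hcm hfix g haper (by positivity)
  choose ψ hψ using hcore
  refine ⟨ψ, ?_⟩
  rw [Metric.tendstoUniformly_iff]
  intro ε hε
  obtain ⟨m, hm2, hmε⟩ := exists_inv_lt hε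
  rw [eventually_atTop]
  refine ⟨m, fun k hk x => ?_⟩
  have h1 := hψ k x
  have hmpos : (0:ℝ) < (m:ℝ) := by
    have : (2:ℝ) ≤ (m:ℝ) := by exact_mod_cast hm2
    linarith
  have h2 : 1/((k:ℝ)+1) ≤ 1/(m:ℝ) := by
    apply one_div_le_one_div_of_le hmpos
    have : (m:ℝ) ≤ (k:ℝ) := by exact_mod_cast hk
    linarith
  show dist (f x) (ψ k (g ((ψ k).symm x))) < ε
  rw [dist_comm]
  linarith
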